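/- For integers 3 ≤ k ≤ p, the graph G_{k,p} is minimally k-connected: κ(G_{k,p}) = k and κ(G_{k,p} − e) < k for every edge e. -/

import Mathlib

/-!
Deleting the `k` neighbours of `w_i` isolates it, and once an edge `w_i x_j` is deleted only
`k - 1` of them are left to delete; this gives the upper bounds.

For the lower bound let `S` have fewer than `k` vertices. Each surviving `w_i` keeps one of its
`k` neighbours, so it suffices to link the surviving `x`-vertices. Suppose they split into
nonempty classes `A` and `B` with no path between them. Then every `w_i` whose window
`x_i, …, x_{i+k-1}` meets both classes lies in `S`. Take a closest pair `a ∈ A`, `a + d ∈ B` and a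
closest pair `b ∈ B`, `b + e ∈ A` on the cycle. The open arcs between them are disjoint and avoid
`A ∪ B`, giving `(d - 1) + (e - 1)` vertices `x` in `S`, while the windows starting at `a - t`
(`t < k - d`) and at `b - t` (`t < k - e`) meet both classes. Counting forces `d = e = 1` and the
two families of `k - 1` windows to coincide, so `a = b`.
-/

namespace AvgConn

/-- The graph `G_{k,p}` on `W ∪ X`, where `W` and `X` are copies of `Fin p` (`W` given by
`Sum.inl`, `X` by `Sum.inr`), and `w_i` is adjacent to `x_{(i+j) mod p}` for `0 ≤ j ≤ k-1`. -/
def Gkp (k p : ℕ) : SimpleGraph (Fin p ⊕ Fin p) :=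
  SimpleGraph.fromRel (fun a b => ∃ i x : Fin p, a = Sum.inl i ∧ b = Sum.inr x ∧
    ∃ j, j < k ∧ (x : ℕ) = ((i : ℕ) + j) % p)

/-- The vertex connectivity of `G`: the least size of a set of vertices whose removal
disconnects `G` or leaves at most one vertex. -/
noncomputable def vertexConn {V : Type*} (G : SimpleGraph V) : ℕ :=
  sInf {n | ∃ S : Set V, S.ncard = n ∧
    (¬ (G.induce Sᶜ).Connected ∨ Sᶜ.ncard ≤ 1)}

/-- `G` is minimally `k`-connected. -/
noncomputable def MinimallyKConnected {V : Type*} (G : SimpleGraph V) (k : ℕ) : Prop :=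
  vertexConn G = k ∧ ∀ e ∈ G.edgeSet, vertexConn (G.deleteEdges {e}) < k

open Fin.CommRing

section Graph

variable {V : Type*} {G : SimpleGraph V}

lemma induce_connected_of_forall_closed {s : Set V} {u : V} (hu : u ∈ s)
    (h : ∀ C ⊆ s, u ∈ C → (∀ v ∈ C, ∀ w ∈ s, G.Adj v w → w ∈ C) → s ⊆ C) :
    (G.induce s).Connected := by
  rw [SimpleGraph.connected_iff_exists_forall_reachable]
  refine ⟨⟨u, hu⟩, fun ⟨w, hw⟩ => ?_⟩
  obtain ⟨_, hr⟩ := h {w | ∃ hw : w ∈ s, (G.induce s).Reachable ⟨u, hu⟩ ⟨w, hw⟩}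
    (fun w hw => hw.1) ⟨hu, .rfl⟩
    (fun v ⟨hv, hr⟩ w hw hvw => ⟨hw, hr.trans (SimpleGraph.Adj.reachable (by simpa using hvw))⟩) hw
  exact hr

lemma vertexConn_le_ncard_neighborSet {u v : V} (huv : u ≠ v) (hnadj : ¬ G.Adj v u) :
    vertexConn G ≤ (G.neighborSet v).ncard := by
  refine Nat.sInf_le ⟨_, rfl, Or.inl fun hconn => ?_⟩
  have hv : v ∈ (G.neighborSet v)ᶜ := G.irrefl
  obtain ⟨⟨w, hw⟩, hvw⟩ := (hconn.preconnected ⟨v, hv⟩ ⟨u, hnadj⟩).nonempty_neighborSet_left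
    fun h => huv (congrArg Subtype.val h).symm
  exact hw (by simpa using hvw)

lemma le_vertexConn [Finite V] {k : ℕ} (hk : k < Nat.card V)
    (h : ∀ S : Set V, S.ncard < k → (G.induce Sᶜ).Connected) : k ≤ vertexConn G := by
  refine le_csInf ⟨_, Set.univ, rfl, Or.inr (by simp)⟩ ?_
  rintro _ ⟨S, rfl, hS | hS⟩ <;> by_contra! hlt
  · exact hS (h S hlt)
  · have := Set.ncard_add_ncard_compl S
    omega

lemma vertexConn_deleteEdges_lt [Finite V] {u v w : V} (huv : G.Adj u v) (hwu : w ≠ u)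
    (hnadj : ¬ G.Adj u w) : vertexConn (G.deleteEdges {s(u, v)}) < (G.neighborSet u).ncard :=
  calc vertexConn (G.deleteEdges {s(u, v)})
      _ ≤ ((G.deleteEdges {s(u, v)}).neighborSet u).ncard :=
        vertexConn_le_ncard_neighborSet hwu fun h => hnadj h.1
      _ = (G.neighborSet u \ {v}).ncard := by
        congr 1
        ext x
        simp +contextual [eq_comm, G.ne_of_adj]
      _ < (G.neighborSet u).ncard := Set.ncard_sdiff_singleton_lt_of_mem huv

end Graph

section Cycle

open Finset

variable {p : ℕ} [NeZero p] {A B : Finset (Fin p)} {a b : Fin p} {d e k : ℕ}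

lemma natCast_injOn_Iio : Set.InjOn (Nat.cast : ℕ → Fin p) (Set.Iio p) := fun s hs t ht h => by
  simpa [Fin.val_cast_of_lt hs, Fin.val_cast_of_lt ht] using congrArg Fin.val h

lemma card_image_natCast {s : Finset ℕ} (hs : ∀ t ∈ s, t < p) {f : Fin p → Fin p}
    (hf : Function.Injective f) : (s.image fun t : ℕ => f t).card = s.card :=
  card_image_of_injOn (hf.comp_injOn (natCast_injOn_Iio.mono hs))

/-- `i` belongs to `mixedWindows k A B` when the window `i, i + 1, …, i + k - 1` of the cycle
meets both `A` and `B`. -/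
def mixedWindows (k : ℕ) (A B : Finset (Fin p)) : Finset (Fin p) :=
  {i | (∃ a ∈ A, ((a - i : Fin p) : ℕ) < k) ∧ ∃ b ∈ B, ((b - i : Fin p) : ℕ) < k}

lemma exists_min_shift (hAB : Disjoint A B) (hA : A.Nonempty) (hB : B.Nonempty) :
    ∃ a ∈ A, ∃ d, 0 < d ∧ d < p ∧ a + (d : Fin p) ∈ B ∧
      ∀ a' ∈ A, ∀ t < d, a' + (t : Fin p) ∉ B := by
  classical
  obtain ⟨a, ha⟩ := hA
  obtain ⟨b, hb⟩ := hB
  have hab : ∃ a' ∈ A, a' + ((b - a : Fin p) : ℕ) ∈ B := ⟨a, ha, by simpa using hb⟩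
  have hex : ∃ d : ℕ, ∃ a' ∈ A, a' + (d : Fin p) ∈ B := ⟨_, hab⟩
  obtain ⟨a₀, ha₀, hb₀⟩ := Nat.find_spec hex
  refine ⟨a₀, ha₀, Nat.find hex, Nat.pos_of_ne_zero fun h0 => ?_,
    (Nat.find_le hab).trans_lt (b - a).isLt, hb₀,
    fun a' ha' t ht hb' => Nat.find_min hex ht ⟨a', ha', hb'⟩⟩
  rw [h0, Nat.cast_zero, add_zero] at hb₀
  exact disjoint_left.mp hAB ha₀ hb₀

lemma image_Ioo_subset_compl_union (ha : a ∈ A) (hb : a + (d : Fin p) ∈ B)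
    (hmin : ∀ a' ∈ A, ∀ t < d, a' + (t : Fin p) ∉ B) :
    (Ioo 0 d).image (fun t : ℕ => a + t) ⊆ (A ∪ B)ᶜ := by
  simp only [subset_iff, mem_image, mem_Ioo, mem_compl, mem_union, not_or]
  rintro _ ⟨t, ⟨ht0, htd⟩, rfl⟩
  refine ⟨fun ha' => hmin _ ha' (d - t) (by omega) ?_, hmin a ha t htd⟩
  rwa [Nat.cast_sub htd.le, add_add_sub_cancel]

lemma image_range_sub_subset_mixedWindows (hkp : k ≤ p) (ha : a ∈ A)
    (hb : a + (d : Fin p) ∈ B) :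
    (range (k - d)).image (fun t : ℕ => a - t) ⊆ mixedWindows k A B := by
  simp only [subset_iff, mem_image, mem_range, mixedWindows, mem_filter, mem_univ, true_and]
  rintro _ ⟨t, ht, rfl⟩
  refine ⟨⟨a, ha, ?_⟩, _, hb, ?_⟩
  · rw [sub_sub_cancel, Fin.val_cast_of_lt (by omega)]
    omega
  · rw [show a + d - (a - t) = ((d + t : ℕ) : Fin p) by push_cast; ring,
      Fin.val_cast_of_lt (by omega)]
    omega

lemma disjoint_image_Ioo (ha : a ∈ A) (hb : b ∈ B)
    (hminA : ∀ a' ∈ A, ∀ t < d, a' + (t : Fin p) ∉ B)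
    (hminB : ∀ b' ∈ B, ∀ t < e, b' + (t : Fin p) ∉ A) :
    Disjoint ((Ioo 0 d).image fun t : ℕ => a + t) ((Ioo 0 e).image fun t : ℕ => b + t) := by
  simp only [disjoint_left, mem_image, mem_Ioo, not_exists, not_and]
  rintro _ ⟨s, ⟨-, hs⟩, rfl⟩ t ⟨-, ht⟩ hts
  rcases le_total t s with hle | hle
  · exact hminA a ha (s - t) (by omega) (by rwa [Nat.cast_sub hle, ← add_sub_assoc, ← hts,
      add_sub_cancel_right])
  · exact hminB b hb (t - s) (by omega) (by rwa [Nat.cast_sub hle, ← add_sub_assoc, hts,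
      add_sub_cancel_right])

lemma eq_of_image_range_sub_eq {n : ℕ} (hn0 : 0 < n) (hnp : n < p)
    (h : (range n).image (fun t : ℕ => a - t) = (range n).image (fun t : ℕ => b - t)) :
    a = b := by
  have hb : b ∈ (range n).image (fun t : ℕ => a - t) := by
    rw [h]
    exact mem_image.mpr ⟨0, mem_range.mpr hn0, by simp⟩
  obtain ⟨t, ht, rfl⟩ := mem_image.mp hb
  rcases Nat.eq_zero_or_pos t with rfl | ht0
  · simp
  -- `a - t + 1 = a - (t - 1)` lies in the left arc, but the right arc ends at `a - t`
  have hsucc : a - t + 1 ∈ (range n).image (fun s : ℕ => a - t - s) := by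
    rw [← h]
    refine mem_image.mpr ⟨t - 1, by simp only [mem_range] at ht ⊢; omega, ?_⟩
    push_cast [Nat.cast_sub ht0]
    ring
  obtain ⟨s, hs, hse⟩ := mem_image.mp hsucc
  have hzero : ((s + 1 : ℕ) : Fin p) = 0 := by
    push_cast
    linear_combination -hse
  have hps := Nat.le_of_dvd (by omega) (Fin.natCast_eq_zero.mp hzero)
  simp only [mem_range] at hs
  omega

theorem le_card_compl_union_add_card_mixedWindows (hk : 2 ≤ k) (hkp : k ≤ p)
    (hAB : Disjoint A B) (hA : A.Nonempty) (hB : B.Nonempty) :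
    k ≤ (A ∪ B)ᶜ.card + (mixedWindows k A B).card := by
  obtain ⟨a, ha, d, hd0, hdp, hb, hminA⟩ := exists_min_shift hAB hA hB
  obtain ⟨b, hb', e, he0, hep, ha', hminB⟩ := exists_min_shift hAB.symm hB hA
  have hgaps : ((Ioo 0 d).image (fun t : ℕ => a + t) ∪ (Ioo 0 e).image (fun t : ℕ => b + t)).card
      = (d - 1) + (e - 1) := by
    rw [card_union_of_disjoint (disjoint_image_Ioo ha hb' hminA hminB),
      card_image_natCast (fun t ht => by simp only [mem_Ioo] at ht; omega) (add_right_injective a),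
      card_image_natCast (fun t ht => by simp only [mem_Ioo] at ht; omega) (add_right_injective b),
      Nat.card_Ioo, Nat.card_Ioo, Nat.sub_zero, Nat.sub_zero]
  have hgaps_sub := union_subset (image_Ioo_subset_compl_union ha hb hminA)
    (union_comm B A ▸ image_Ioo_subset_compl_union hb' ha' hminB)
  have hCa := card_image_natCast (s := Finset.range (k - d))
    (fun t ht => by simp only [mem_range] at ht; omega) (sub_right_injective (b := a))
  have hCb := card_image_natCast (s := Finset.range (k - e))
    (fun t ht => by simp only [mem_range] at ht; omega) (sub_right_injective (b := b))
  have hC_sub := union_subset (image_range_sub_subset_mixedWindows hkp ha hb)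
    (by simpa only [mixedWindows, and_comm] using image_range_sub_subset_mixedWindows hkp hb' ha')
  rw [card_range] at hCa hCb
  set Ca := (range (k - d)).image fun t : ℕ => a - t
  set Cb := (range (k - e)).image fun t : ℕ => b - t
  by_contra! hlt
  have hX := card_le_card hgaps_sub
  have hW := card_le_card hC_sub
  have hCa_le := card_le_card (subset_union_left : Ca ⊆ Ca ∪ Cb)
  have hCb_le := card_le_card (subset_union_right : Cb ⊆ Ca ∪ Cb)
  obtain rfl : d = 1 := by omega
  obtain rfl : e = 1 := by omega
  have hCa_eq : Ca = Ca ∪ Cb := eq_of_subset_of_card_le subset_union_left (by omega)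
  have hCb_eq : Cb = Ca ∪ Cb := eq_of_subset_of_card_le subset_union_right (by omega)
  have hab : a = b := eq_of_image_range_sub_eq (by omega) (by omega) (hCa_eq.trans hCb_eq.symm)
  exact disjoint_left.mp hAB ha (hab ▸ hb')

end Cycle

section Gkp

variable {k p : ℕ}

lemma Gkp_adj_inl_inr [NeZero p] (i x : Fin p) :
    (Gkp k p).Adj (.inl i) (.inr x) ↔ ((x - i : Fin p) : ℕ) < k := by
  simp only [Gkp, SimpleGraph.fromRel_adj, ne_eq, reduceCtorEq, not_false_eq_true, Sum.inl.injEq,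
    Sum.inr.injEq, exists_and_left, exists_eq_left', true_and, false_and, exists_false, or_false]
  constructor
  · rintro ⟨j, hj, hx⟩
    have : x - i = (j : Fin p) := by
      rw [sub_eq_iff_eq_add']
      ext
      simp [Fin.val_add, hx]
    rw [this, Fin.val_natCast]
    exact (Nat.mod_le _ _).trans_lt hj
  · intro h
    exact ⟨_, h, by rw [← Fin.val_add, add_sub_cancel]⟩

lemma Gkp_not_adj_inl_inl (i j : Fin p) : ¬ (Gkp k p).Adj (.inl i) (.inl j) := by
  simp [Gkp]

lemma Gkp_not_adj_inr_inr (x y : Fin p) : ¬ (Gkp k p).Adj (.inr x) (.inr y) := by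
  simp [Gkp]

lemma Gkp_neighborSet_inl [NeZero p] (hkp : k ≤ p) (i : Fin p) :
    (Gkp k p).neighborSet (.inl i) = Set.range fun t : Fin k => .inr (i + (t : ℕ)) := by
  ext (j | x)
  · simp [Gkp_not_adj_inl_inl]
  · simp only [SimpleGraph.mem_neighborSet, Gkp_adj_inl_inr, Set.mem_range, Sum.inr.injEq]
    constructor
    · intro h
      exact ⟨⟨_, h⟩, by simp⟩
    · rintro ⟨t, rfl⟩
      rw [add_sub_cancel_left, Fin.val_cast_of_lt (t.2.trans_le hkp)]
      exact t.2

lemma Gkp_ncard_neighborSet_inl [NeZero p] (hkp : k ≤ p) (i : Fin p) :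
    ((Gkp k p).neighborSet (.inl i)).ncard = k := by
  rw [Gkp_neighborSet_inl hkp, Set.ncard_range_of_injective, Nat.card_eq_fintype_card,
    Fintype.card_fin]
  intro s t h
  exact Fin.ext (natCast_injOn_Iio (s.2.trans_le hkp) (t.2.trans_le hkp)
    (add_left_cancel (Sum.inr_injective h)))

lemma Gkp_exists_adj_notMem [NeZero p] (hkp : k ≤ p) {S : Set (Fin p ⊕ Fin p)}
    (hS : S.ncard < k) (i : Fin p) : ∃ x, .inr x ∉ S ∧ ((x - i : Fin p) : ℕ) < k := by
  obtain ⟨v, hv, hvS⟩ := Set.exists_mem_notMem_of_ncard_lt_ncard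
    (hS.trans_eq (Gkp_ncard_neighborSet_inl hkp i).symm)
  rcases v with j | x
  · exact absurd hv (Gkp_not_adj_inl_inl i j)
  · exact ⟨x, hvS, (Gkp_adj_inl_inr i x).mp hv⟩

lemma Gkp_exists_inl_of_mem_edgeSet {e : Sym2 (Fin p ⊕ Fin p)} (he : e ∈ (Gkp k p).edgeSet) :
    ∃ i v, (Gkp k p).Adj (.inl i) v ∧ e = s(.inl i, v) := by
  induction e using Sym2.ind with | h u v => ?_
  rcases u with i | x
  · exact ⟨i, v, he, rfl⟩
  rcases v with i | y
  · exact ⟨i, .inr x, he.symm, Sym2.eq_swap⟩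
  · exact absurd he (Gkp_not_adj_inr_inr x y)

theorem Gkp_induce_compl_connected [NeZero p] (hk : 2 ≤ k) (hkp : k ≤ p)
    {S : Set (Fin p ⊕ Fin p)} (hS : S.ncard < k) : ((Gkp k p).induce Sᶜ).Connected := by
  classical
  obtain ⟨a, ha, -⟩ := Gkp_exists_adj_notMem hkp hS 0
  refine induce_connected_of_forall_closed (u := .inr a) ha fun C _ haC hC => ?_
  by_contra hsub
  obtain ⟨v, hvS, hvC⟩ := Set.not_subset.mp hsub
  let A : Finset (Fin p) := {x | .inr x ∈ C}
  let B : Finset (Fin p) := {x | .inr x ∉ S ∧ .inr x ∉ C}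
  have hB : B.Nonempty := by
    rcases v with i | x
    · obtain ⟨x, hxS, hix⟩ := Gkp_exists_adj_notMem hkp hS i
      exact ⟨x, by simpa [B, hxS] using
        fun hxC => hvC (hC _ hxC _ hvS ((Gkp_adj_inl_inr i x).mpr hix).symm)⟩
    · exact ⟨x, by simpa [B, hvC] using hvS⟩
  have hAB : Disjoint A B := Finset.disjoint_filter.mpr fun x _ hxC hxB => hxB.2 hxC
  have hsubS : ((mixedWindows k A B).disjSum (A ∪ B)ᶜ : Set (Fin p ⊕ Fin p)) ⊆ S := by
    rintro (i | x) h
    · simp only [Finset.mem_coe, Finset.inl_mem_disjSum, mixedWindows, Finset.mem_filter,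
        Finset.mem_univ, true_and, A, B] at h
      obtain ⟨⟨y, hyC, hy⟩, z, ⟨hzS, hzC⟩, hz⟩ := h
      by_contra hiS
      have hiC := hC _ hyC _ hiS ((Gkp_adj_inl_inr i y).mpr hy).symm
      exact hzC (hC _ hiC _ hzS ((Gkp_adj_inl_inr i z).mpr hz))
    · simp only [Finset.mem_coe, Finset.inr_mem_disjSum, Finset.mem_compl, Finset.mem_union,
        Finset.mem_filter, Finset.mem_univ, true_and, A, B] at h
      tauto
  have hk_le := le_card_compl_union_add_card_mixedWindows hk hkp hAB
    ⟨a, by simpa [A] using haC⟩ hB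
  have hS_ge := Set.ncard_le_ncard hsubS
  rw [Set.ncard_coe_finset, Finset.card_disjSum] at hS_ge
  omega

end Gkp

theorem Gkp_minimally_k_connected (k p : ℕ) (hk : 3 ≤ k) (hkp : k ≤ p) :
    MinimallyKConnected (Gkp k p) k := by
  have : NeZero p := ⟨by omega⟩
  have : Nontrivial (Fin p) := Fin.nontrivial_iff_two_le.mpr (by omega)
  refine ⟨le_antisymm ?_ ?_, fun e he => ?_⟩
  · obtain ⟨j, hj⟩ := exists_ne (0 : Fin p)
    simpa [Gkp_ncard_neighborSet_inl hkp] using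
      vertexConn_le_ncard_neighborSet (G := Gkp k p) (Sum.inl_injective.ne hj)
        (Gkp_not_adj_inl_inl _ _)
  · exact le_vertexConn (by simp; omega) fun S hS => Gkp_induce_compl_connected (by omega) hkp hS
  · obtain ⟨i, v, hadj, rfl⟩ := Gkp_exists_inl_of_mem_edgeSet he
    obtain ⟨j, hj⟩ := exists_ne i
    exact (vertexConn_deleteEdges_lt hadj (Sum.inl_injective.ne hj)
      (Gkp_not_adj_inl_inl _ _)).trans_eq (Gkp_ncard_neighborSet_inl hkp i)

end AvgConn
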